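/- Let b > 0 and let X₁, …, X_n be mutually independent random variables each taking values in [0,b], with S = X₁ + ⋯ + X_n. Then for every λ > 0, E[exp(λS)] ≤ (1 + ((e^{λb} − 1)/b)·(E[S]/n))^n. -/

import Mathlib

open MeasureTheory ProbabilityTheory Finset Matrix Filter

noncomputable section

namespace HSBM

/-- The set of (hyper)edges: all `d`-element subsets of `[n]`. -/
def edgeSet (n d : ℕ) : Finset (Finset (Fin n)) :=
  (Finset.univ : Finset (Fin n)).powersetCard d

/-- An edge is homogeneous w.r.t. a partition `Ψ` if all its nodes lie in one group. -/
def homogeneous {n k : ℕ} (Ψ : Fin n → Fin k) (e : Finset (Fin n)) : Prop :=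
  ∀ i ∈ e, ∀ j ∈ e, Ψ i = Ψ j

/-- Similarity matrix built from the weights of the edges in `E₁` only. -/
def simMatrixOn {n : ℕ} (d : ℕ) (E₁ : Finset (Finset (Fin n))) (W : Finset (Fin n) → ℝ) :
    Matrix (Fin n) (Fin n) ℝ := fun i j =>
  if i = j then 0
  else ∑ e ∈ edgeSet n d ∩ E₁, if ({i, j} : Finset (Fin n)) ⊆ e then W e else 0

/-- Similarity matrix `A` of a weighted hypergraph. -/
def simMatrix {n : ℕ} (d : ℕ) (W : Finset (Fin n) → ℝ) : Matrix (Fin n) (Fin n) ℝ :=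
  simMatrixOn d (edgeSet n d) W

/-- Processed similarity matrix `A⁰`: rows (and columns) whose sum exceeds
`c_thr · (1/n) · Σ_{i,j} A_{ij}` are zeroed out. -/
def processed {n : ℕ} (cthr : ℝ) (A : Matrix (Fin n) (Fin n) ℝ) : Matrix (Fin n) (Fin n) ℝ :=
  fun i j =>
    if cthr * ((1 : ℝ) / n) * ∑ a, ∑ b, A a b < ∑ l, A i l ∨
        cthr * ((1 : ℝ) / n) * ∑ a, ∑ b, A a b < ∑ l, A j l then 0
    else A i j

/-- `U` is an `n × k` matrix whose columns are orthonormal eigenvectors of `M`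
associated with its `k` largest eigenvalues. -/
def IsTopEigen {n k : ℕ} (M : Matrix (Fin n) (Fin n) ℝ) (U : Matrix (Fin n) (Fin k) ℝ) : Prop :=
  ∃ (v : Fin n → Fin n → ℝ) (lam : Fin n → ℝ),
    (∀ a b : Fin n, v a ⬝ᵥ v b = if a = b then (1 : ℝ) else 0) ∧
    (∀ a : Fin n, M.mulVec (v a) = lam a • v a) ∧
    (∀ a b : Fin n, a ≤ b → lam b ≤ lam a) ∧
    (∀ (j : Fin k) (hj : (j : ℕ) < n) (i : Fin n), U i j = v ⟨j, hj⟩ i)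

def clusterOf {n k : ℕ} (Φ : Fin n → Fin k) (j : Fin k) : Finset (Fin n) :=
  Finset.univ.filter fun i => Φ i = j

/-- `k`-means cost of a partition `Φ` of the rows of `U`. -/
def kmCost {n k : ℕ} (U : Matrix (Fin n) (Fin k) ℝ) (Φ : Fin n → Fin k) : ℝ :=
  ∑ j : Fin k, ∑ i ∈ clusterOf Φ j,
    ∑ m : Fin k,
      (U i m - (1 / ((clusterOf Φ j).card : ℝ)) * ∑ l ∈ clusterOf Φ j, U l m) ^ 2

/-- `Φ` is a `(1+ε)`-approximate `k`-means solution for the rows of `U`. -/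
def IsApproxKMeans {n k : ℕ} (ε : ℝ) (U : Matrix (Fin n) (Fin k) ℝ) (Φ : Fin n → Fin k) : Prop :=
  ∀ Φ' : Fin n → Fin k, kmCost U Φ ≤ (1 + ε) * kmCost U Φ'

/-- `Φ` is an output of HSC run on the edges in `E₁`. -/
def IsHSCOutputOn {n k : ℕ} (d : ℕ) (cthr ε : ℝ) (E₁ : Finset (Finset (Fin n)))
    (W : Finset (Fin n) → ℝ) (Φ : Fin n → Fin k) : Prop :=
  ∃ U : Matrix (Fin n) (Fin k) ℝ,
    IsTopEigen (processed cthr (simMatrixOn d E₁ W)) U ∧ IsApproxKMeans ε U Φ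

/-- `Φ` is an output of HSC. -/
def IsHSCOutput {n k : ℕ} (d : ℕ) (cthr ε : ℝ) (W : Finset (Fin n) → ℝ)
    (Φ : Fin n → Fin k) : Prop :=
  IsHSCOutputOn d cthr ε (edgeSet n d) W Φ

/-- `E^{(i)}(j)`: the edges of `E₂` containing `i` whose other nodes all lie in `Φ₀⁻¹(j)`. -/
def refineEdges {n k : ℕ} (E₂ : Finset (Finset (Fin n))) (Φ₀ : Fin n → Fin k)
    (i : Fin n) (j : Fin k) : Finset (Finset (Fin n)) :=
  E₂.filter fun e => i ∈ e ∧ ∀ l ∈ e, l ≠ i → Φ₀ l = j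

/-- Average weight over `E^{(i)}(j)`. -/
def avgWeight {n k : ℕ} (W : Finset (Fin n) → ℝ) (E₂ : Finset (Finset (Fin n)))
    (Φ₀ : Fin n → Fin k) (i : Fin n) (j : Fin k) : ℝ :=
  (∑ e ∈ refineEdges E₂ Φ₀ i j, W e) / ((refineEdges E₂ Φ₀ i j).card : ℝ)

/-- `Φ` is an output of HSCLR given realized weights `W` and split indicators `ξ`
(`ξ e = 1` iff `e ∈ E₁`). -/
def IsHSCLROutput {n k : ℕ} (d : ℕ) (cthr ε : ℝ) (W : Finset (Fin n) → ℝ)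
    (ξ : Finset (Fin n) → ℝ) (Φ : Fin n → Fin k) : Prop :=
  ∃ Φ₀ : Fin n → Fin k,
    IsHSCOutputOn d cthr ε ((edgeSet n d).filter fun e => ξ e = 1) W Φ₀ ∧
    ∀ (i : Fin n) (j : Fin k),
      avgWeight W ((edgeSet n d).filter fun e => ξ e ≠ 1) Φ₀ i j ≤
        avgWeight W ((edgeSet n d).filter fun e => ξ e ≠ 1) Φ₀ i (Φ i)

/-- Error fraction `err(Φ)`. -/
def errFrac {n k : ℕ} (Ψ Φ : Fin n → Fin k) : ℝ :=
  (⨅ π : Equiv.Perm (Fin k),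
    ((Finset.univ.filter fun i => Ψ i ≠ π (Φ i)).card : ℝ)) / n

/-- Size of the `j`-th cluster. -/
def csize {n k : ℕ} (Ψ : Fin n → Fin k) (j : Fin k) : ℕ :=
  (Finset.univ.filter fun i => Ψ i = j).card

def nmin {n k : ℕ} (Ψ : Fin n → Fin k) : ℕ := sInf (Set.range fun j => csize Ψ j)

def nmax {n k : ℕ} (Ψ : Fin n → Fin k) : ℕ := sSup (Set.range fun j => csize Ψ j)

/-- Worst-cluster error fraction `errr(Φ)`. -/
def errrFrac {n k : ℕ} (Ψ Φ : Fin n → Fin k) : ℝ :=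
  ⨅ π : Equiv.Perm (Fin k), ⨆ j : Fin k,
    ((Finset.univ.filter fun i => Ψ i = j ∧ π (Φ i) ≠ j).card : ℝ) / (csize Ψ j : ℝ)

/-- Membership matrix `Z` of a partition `Ψ`. -/
def memMatrix {n k : ℕ} (Ψ : Fin n → Fin k) : Matrix (Fin n) (Fin k) ℝ :=
  fun i j => if Ψ i = j then 1 else 0

/-- Spectral norm of a real square matrix. -/
def specNorm {n : ℕ} (M : Matrix (Fin n) (Fin n) ℝ) : ℝ :=
  ‖Matrix.toEuclideanCLM (𝕜 := ℝ) M‖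

theorem _root_.Matrix.isHermitian_transpose_mul_self {m n α : Type*} [Fintype m]
    [CommSemiring α] [StarRing α] [TrivialStar α] (A : Matrix m n α) : (Aᵀ * A).IsHermitian := by
  simpa [Matrix.conjTranspose_eq_transpose_of_trivial] using Matrix.isHermitian_conjTranspose_mul_self A

/-- Smallest nonzero singular value of a real square matrix. -/
def sigmaNZmin {m : ℕ} (M : Matrix (Fin m) (Fin m) ℝ) : ℝ :=
  sInf {r : ℝ | r ≠ 0 ∧ ∃ i : Fin m,
    r = Real.sqrt ((Matrix.isHermitian_transpose_mul_self M).eigenvalues i)}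

/-- Smallest singular value of a real square matrix. -/
def sigmaMin {m : ℕ} (M : Matrix (Fin m) (Fin m) ℝ) : ℝ :=
  sInf {r : ℝ | ∃ i : Fin m,
    r = Real.sqrt ((Matrix.isHermitian_transpose_mul_self M).eigenvalues i)}

/-- `den_M(S,T) = Σ_{i∈S} Σ_{j∈T} M_{ij}`. -/
def den {n : ℕ} (M : Matrix (Fin n) (Fin n) ℝ) (S T : Finset (Fin n)) : ℝ :=
  ∑ i ∈ S, ∑ j ∈ T, M i j

/-- `f_e(X) = 1` if all coordinates of `X` indexed by `e` agree, and `0` otherwise. -/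
def fval {nn : ℕ} (X : Fin nn → Bool) (e : Finset (Fin nn)) : ℝ :=
  if ∀ i ∈ e, ∀ j ∈ e, X i = X j then 1 else 0

/-- An instance of the weighted stochastic block model on a measurable space `Ω`. -/
structure WSBM (n d k : ℕ) (p q : ℝ) (Ω : Type*) [MeasurableSpace Ω] where
  μ : Measure Ω
  prob : IsProbabilityMeasure μ
  Ψ : Fin n → Fin k
  surj : Function.Surjective Ψ
  α : ℝ
  α_pos : 0 < α
  α_le_one : α ≤ 1
  W : Finset (Fin n) → Ω → ℝ
  W_meas : ∀ e, Measurable (W e)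
  W_range : ∀ e, ∀ᵐ ω ∂μ, W e ω ∈ Set.Icc (0 : ℝ) 1
  W_indep : iIndepFun W μ
  W_homo : ∀ e ∈ edgeSet n d, homogeneous Ψ e → ∫ ω, W e ω ∂μ = p * α
  W_hetero : ∀ e ∈ edgeSet n d, ¬ homogeneous Ψ e → ∫ ω, W e ω ∂μ = q * α

/-! On `[0, b]` the convex function `x ↦ exp (t x)` lies below its chord, so
`E[exp (t Xᵢ)] ≤ 1 + c E[Xᵢ]` with `c = (exp (t b) - 1) / b`. Independence factors the
moment generating function of `S` into these terms, and AM-GM bounds their product by the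
`n`-th power of their mean, which is `1 + c E[S] / n`. -/

theorem prod_le_sum_div_card_pow {ι : Type*} (s : Finset ι) {z : ι → ℝ}
    (hz : ∀ i ∈ s, 0 ≤ z i) : ∏ i ∈ s, z i ≤ ((∑ i ∈ s, z i) / #s) ^ #s := by
  rcases s.eq_empty_or_nonempty with rfl | hs
  · simp
  have hcard : (0 : ℝ) < #s := by exact_mod_cast hs.card_pos
  have hmean := Real.geom_mean_le_arith_mean s (fun _ => 1) z (fun _ _ => zero_le_one)
    (by simpa using hcard) hz
  simp only [Real.rpow_one, one_mul, sum_const, nsmul_eq_mul, mul_one] at hmean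
  calc ∏ i ∈ s, z i = ((∏ i ∈ s, z i) ^ ((#s : ℝ)⁻¹)) ^ #s := by
        rw [← Real.rpow_natCast, ← Real.rpow_mul (prod_nonneg hz), inv_mul_cancel₀ hcard.ne',
          Real.rpow_one]
    _ ≤ ((∑ i ∈ s, z i) / #s) ^ #s :=
        pow_le_pow_left₀ (Real.rpow_nonneg (prod_nonneg hz) _) hmean _

theorem exp_mul_le_one_add_div_mul (t : ℝ) {b x : ℝ} (hx : x ∈ Set.Icc 0 b) :
    Real.exp (t * x) ≤ 1 + (Real.exp (t * b) - 1) / b * x := by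
  obtain ⟨hx0, hxb⟩ := hx
  rcases hx0.eq_or_lt with rfl | hxpos
  · simp
  have hb : 0 < b := hxpos.trans_le hxb
  have hchord := convexOn_exp.2 (Set.mem_univ 0) (Set.mem_univ (t * b))
    (show 0 ≤ 1 - x / b by rw [sub_nonneg, div_le_one hb]; exact hxb)
    (show 0 ≤ x / b by positivity) (by ring)
  have hpoint : (1 - x / b) • (0 : ℝ) + (x / b) • (t * b) = t * x := by
    simp only [smul_eq_mul, mul_zero, zero_add]; field_simp
  rw [hpoint] at hchord
  calc Real.exp (t * x) ≤ (1 - x / b) • Real.exp 0 + (x / b) • Real.exp (t * b) := hchord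
    _ = 1 + (Real.exp (t * b) - 1) / b * x := by simp only [smul_eq_mul, Real.exp_zero]; ring

theorem mgf_le_one_add_div_mul_integral {Ω : Type*} [MeasurableSpace Ω] {μ : Measure Ω}
    [IsProbabilityMeasure μ] {X : Ω → ℝ} {b : ℝ} (hX : AEMeasurable X μ)
    (hXb : ∀ᵐ ω ∂μ, X ω ∈ Set.Icc 0 b) (t : ℝ) :
    mgf X μ t ≤ 1 + (Real.exp (t * b) - 1) / b * μ[X] := by
  have hint := Integrable.of_mem_Icc 0 b hX hXb
  calc mgf X μ t = ∫ ω, Real.exp (t * X ω) ∂μ := rfl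
    _ ≤ ∫ ω, (1 + (Real.exp (t * b) - 1) / b * X ω) ∂μ :=
        integral_mono_of_nonneg (ae_of_all _ fun _ => (Real.exp_pos _).le)
          ((integrable_const 1).add (hint.const_mul _))
          (hXb.mono fun _ hω => exp_mul_le_one_add_div_mul t hω)
    _ = 1 + (Real.exp (t * b) - 1) / b * μ[X] := by
        rw [integral_add (integrable_const 1) (hint.const_mul _), integral_const_mul]
        simp

theorem statement10_general (b : ℝ) (Ω : Type) [MeasurableSpace Ω] (μ : Measure Ω)
    [IsProbabilityMeasure μ] (n : ℕ) (X : Fin n → Ω → ℝ)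
    (hmeas : ∀ i, Measurable (X i))
    (hrange : ∀ i, ∀ᵐ ω ∂μ, X i ω ∈ Set.Icc (0 : ℝ) b)
    (hindep : iIndepFun X μ)
    (t : ℝ) :
    (∫ ω, Real.exp (t * ∑ i, X i ω) ∂μ) ≤
      (1 + (Real.exp (t * b) - 1) / b * ((∫ ω, ∑ i, X i ω ∂μ) / n)) ^ n := by
  rcases eq_or_ne n 0 with rfl | hn
  · simp
  set c := (Real.exp (t * b) - 1) / b
  have hmgf i : mgf (X i) μ t ≤ 1 + c * μ[X i] :=
    mgf_le_one_add_div_mul_integral (hmeas i).aemeasurable (hrange i) t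
  have hint i : Integrable (X i) μ := Integrable.of_mem_Icc 0 b (hmeas i).aemeasurable (hrange i)
  calc (∫ ω, Real.exp (t * ∑ i, X i ω) ∂μ) = ∏ i, mgf (X i) μ t := by
        rw [← hindep.mgf_sum hmeas]; simp only [mgf, Finset.sum_apply]
    _ ≤ ∏ i, (1 + c * μ[X i]) := prod_le_prod (fun _ _ => mgf_nonneg) fun i _ => hmgf i
    _ ≤ ((∑ i, (1 + c * μ[X i])) / n) ^ n := by
        simpa using prod_le_sum_div_card_pow univ fun i _ => mgf_nonneg.trans (hmgf i)
    _ = (1 + c * ((∫ ω, ∑ i, X i ω ∂μ) / n)) ^ n := by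
        rw [integral_finsetSum _ fun i _ => hint i, sum_add_distrib, ← mul_sum,
          sum_const, card_univ, Fintype.card_fin, nsmul_one]
        field_simp

/-- moment-generating-function bound. -/
theorem statement10 (b : ℝ) (hb : 0 < b) (Ω : Type) [MeasurableSpace Ω] (μ : Measure Ω)
    [IsProbabilityMeasure μ] (n : ℕ) (X : Fin n → Ω → ℝ)
    (hmeas : ∀ i, Measurable (X i))
    (hrange : ∀ i, ∀ᵐ ω ∂μ, X i ω ∈ Set.Icc (0 : ℝ) b)
    (hindep : iIndepFun X μ)
    (t : ℝ) (ht : 0 < t) :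
    (∫ ω, Real.exp (t * ∑ i, X i ω) ∂μ) ≤
      (1 + (Real.exp (t * b) - 1) / b * ((∫ ω, ∑ i, X i ω ∂μ) / n)) ^ n :=
  statement10_general b Ω μ n X hmeas hrange hindep t

end HSBM
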